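/- Every doubled pattern with exactly 5 distinct variables and length exactly 10 whose first three letters are three pairwise distinct variables (i.e., whose prefix of length 3 is ABC up to renaming of variables) is 3-avoidable. -/

import Mathlib

/-- An occurrence of the pattern `p` in the word `w`: a non-erasing morphism
`h` (given by its values on variables) whose image of `p` is a factor of `w`. -/
def Occurs {V α : Type*} (p : List V) (w : List α) : Prop :=
  ∃ h : V → List α, (∀ v, h v ≠ []) ∧ (p.flatMap h) <:+: w

/-- A pattern is doubled if every variable occurring in it occurs at least twice. -/
def Doubled {V : Type*} [DecidableEq V] (p : List V) : Prop :=
  ∀ v ∈ p, 2 ≤ p.count v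

/-- A pattern is `k`-avoidable if some infinite word over a `k`-letter alphabet
contains no occurrence of it. -/
def IsKAvoidable {V : Type*} (k : ℕ) (p : List V) : Prop :=
  ∃ f : ℕ → Fin k, ∀ n : ℕ, ¬ Occurs p (List.ofFn fun i : Fin n => f i)

/-!
Since the pattern is doubled, with five variables and length ten, every variable occurs
exactly twice: it is `a b c t` with `t` a permutation of `d e a b c d e`. Let `A n` be the
number of ternary words of length `n` avoiding it. Of the `3 A n` one-letter extensions of
such words, a bad one ends with an occurrence `u h(a) h(b) h(c) h(t)`, so it is determined by
its avoiding prefix `u h(a) h(b) h(c)` of length `n + 1 - |h(t)|`, the lengths of `h(a)`,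
`h(b)`, `h(c)` and the words `h(d)`, `h(e)`. If `A` has grown by a factor `14/5` at every
earlier step, the bad extensions number at most
`(14/5) A n ∑ (5/14)^(|h a| + |h b| + |h c|) (75/196)^(|h d| + |h e|) ≤ A n / 5`,
so `A (n + 1) ≥ (14/5) A n > 0`. König's lemma then yields an infinite avoiding word.
-/

open Finset

theorem pow_sub_mul_le_of_forall_mul_le {R : Type*} [Semiring R] [PartialOrder R]
    [IsOrderedRing R] {f : ℕ → R} {r : R} (hr : 0 ≤ r) {n : ℕ}
    (h : ∀ m < n, r * f m ≤ f (m + 1)) {m : ℕ} (hm : m ≤ n) : r ^ (n - m) * f m ≤ f n := by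
  induction n with
  | zero => simp [Nat.le_zero.mp hm]
  | succ n ih =>
    rcases hm.eq_or_lt with rfl | hm
    · simp
    calc r ^ (n + 1 - m) * f m = r * (r ^ (n - m) * f m) := by
          rw [Nat.sub_add_comm (by omega), pow_succ', mul_assoc]
      _ ≤ r * f n := mul_le_mul_of_nonneg_left (ih (fun k hk => h k (by omega)) (by omega)) hr
      _ ≤ f (n + 1) := h n (by omega)

theorem sum_Icc_pow_le {K : Type*} [Field K] [LinearOrder K] [IsStrictOrderedRing K] {x : K}
    (h0 : 0 ≤ x) (h1 : x < 1) (N : ℕ) : ∑ j ∈ Icc 1 N, x ^ j ≤ x / (1 - x) := by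
  simpa [← Ico_add_one_right_eq_Icc] using geom_sum_Ico_le_of_lt_one (m := 1) (n := N + 1) h0 h1

section

variable {V α : Type*}

theorem Occurs.mono {p : List V} {u w : List α} (h : Occurs p u) (huw : u <:+: w) :
    Occurs p w :=
  let ⟨φ, hφ, hinf⟩ := h
  ⟨φ, hφ, hinf.trans huw⟩

theorem not_occurs_nil {p : List V} (hp : p ≠ []) : ¬ Occurs p ([] : List α) := by
  rintro ⟨φ, hφ, hinf⟩
  obtain ⟨v, hv⟩ := List.exists_mem_of_ne_nil p hp
  exact hφ v (List.flatMap_eq_nil_iff.mp (List.eq_nil_of_infix_nil hinf) v hv)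

theorem exists_suffix_of_occurs_append_singleton {p : List V} {w : List α} {x : α}
    (hw : ¬ Occurs p w) (h : Occurs p (w ++ [x])) :
    ∃ φ : V → List α, (∀ v, φ v ≠ []) ∧ ∃ u, u ++ p.flatMap φ = w ++ [x] := by
  obtain ⟨φ, hφ, u, s, hus⟩ := h
  refine ⟨φ, hφ, u, ?_⟩
  rcases List.eq_nil_or_concat s with rfl | ⟨s, y, rfl⟩
  · simpa using hus
  · rw [List.concat_eq_append, ← List.append_assoc] at hus
    exact absurd ⟨φ, hφ, u, s, (List.append_inj' hus rfl).1⟩ hw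

theorem List.ofFn_prefix_ofFn_succ (f : ℕ → α) (n : ℕ) :
    (List.ofFn fun i : Fin n => f i) <+: List.ofFn fun i : Fin (n + 1) => f i :=
  ⟨[f n], by rw [List.ofFn_succ']; simp⟩

/-- König's lemma, by compactness of `ℕ → α`. -/
theorem exists_seq_forall_ofFn [Finite α] {P : List α → Prop}
    (hP : ∀ ⦃u w⦄, u <+: w → P w → P u) (h : ∀ n, ∃ w : List α, w.length = n ∧ P w) :
    ∃ f : ℕ → α, ∀ n, P (List.ofFn fun i : Fin n => f i) := by
  let _ : TopologicalSpace α := ⊥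
  have : DiscreteTopology α := ⟨rfl⟩
  obtain ⟨x₀⟩ : Nonempty α := by
    obtain ⟨w, hw, -⟩ := h 1
    exact ⟨w.head (List.ne_nil_of_length_eq_add_one hw)⟩
  let S : ℕ → Set (ℕ → α) := fun n => {f | P (List.ofFn fun i : Fin n => f i)}
  have hclosed : ∀ n, IsClosed (S n) := fun n =>
    (isClosed_discrete {g : Fin n → α | P (List.ofFn g)}).preimage (by fun_prop)
  obtain ⟨f, hf⟩ := IsCompact.nonempty_iInter_of_sequence_nonempty_isCompact_isClosed S
    (fun n _ hf => hP (List.ofFn_prefix_ofFn_succ _ n) hf)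
    (fun n => by
      obtain ⟨w, rfl, hw⟩ := h n
      refine ⟨fun i => w.getD i x₀, ?_⟩
      simpa [S, List.getD_eq_getElem] using hw)
    (hclosed 0).isCompact hclosed
  exact ⟨f, Set.mem_iInter.mp hf⟩

theorem isKAvoidable_of_forall_length {k : ℕ} {p : List V}
    (h : ∀ n, ∃ w : List (Fin k), w.length = n ∧ ¬ Occurs p w) : IsKAvoidable k p :=
  exists_seq_forall_ofFn (fun _ _ huw hw hu => hw (hu.mono huw.isInfix)) h

section Counting

variable [Fintype α]

variable (α) in
def words (n : ℕ) : Finset (List α) :=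
  univ.map ⟨List.ofFn, List.ofFn_injective (n := n)⟩

theorem mem_words {n : ℕ} {w : List α} : w ∈ words α n ↔ w.length = n := by
  refine ⟨fun hw => ?_, fun hw => ?_⟩
  · obtain ⟨g, -, rfl⟩ := mem_map.mp hw
    exact List.length_ofFn
  · subst hw
    exact mem_map.mpr ⟨w.get, mem_univ _, List.ofFn_get w⟩

theorem card_words (n : ℕ) : #(words α n) = Fintype.card α ^ n := by
  simp [words]

open Classical in
noncomputable def avoiders (p : List V) (n : ℕ) : Finset (List α) :=
  {w ∈ words α n | ¬ Occurs p w}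

theorem mem_avoiders {p : List V} {n : ℕ} {w : List α} :
    w ∈ avoiders p n ↔ w.length = n ∧ ¬ Occurs p w := by
  simp [avoiders, mem_words]

variable [DecidableEq α]

noncomputable def extensions (p : List V) (n : ℕ) : Finset (List α) :=
  (avoiders p n ×ˢ univ).image fun x => x.1 ++ [x.2]

open Classical in
noncomputable def badExtensions (p : List V) (n : ℕ) : Finset (List α) :=
  {w ∈ extensions p n | Occurs p w}

theorem card_extensions (p : List V) (n : ℕ) :
    #(extensions (α := α) p n) = #(avoiders (α := α) p n) * Fintype.card α := by
  rw [extensions, card_image_of_injOn, card_product, card_univ]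
  rintro ⟨u, x⟩ hu ⟨u', x'⟩ hu' h
  have hlen : u.length = u'.length := by
    simp only [coe_product, Set.mem_prod, mem_coe, mem_avoiders] at hu hu'
    rw [hu.1.1, hu'.1.1]
  obtain ⟨rfl, h⟩ := List.append_inj h hlen
  simp_all

theorem card_extensions_le (p : List V) (n : ℕ) :
    #(extensions (α := α) p n) ≤
      #(avoiders (α := α) p (n + 1)) + #(badExtensions (α := α) p n) := by
  classical
  rw [← card_filter_add_card_filter_not (Occurs p), add_comm]
  refine Nat.add_le_add_right (card_le_card fun w hw => ?_) _
  obtain ⟨hw, hocc⟩ := mem_filter.mp hw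
  obtain ⟨⟨u, x⟩, hu, rfl⟩ := mem_image.mp hw
  simp only [mem_product, mem_avoiders] at hu
  exact mem_avoiders.mpr ⟨by simp [hu.1.1], hocc⟩

end Counting

section FivePattern

def tailLength (l : ℕ × ℕ × ℕ × ℕ × ℕ) : ℕ :=
  l.1 + l.2.1 + l.2.2.1 + 2 * l.2.2.2.1 + 2 * l.2.2.2.2

def lengthBox (N : ℕ) : Finset (ℕ × ℕ × ℕ × ℕ × ℕ) :=
  Icc 1 N ×ˢ Icc 1 N ×ˢ Icc 1 N ×ˢ Icc 1 N ×ˢ Icc 1 N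

theorem sum_lengthBox_le (N : ℕ) :
    ∑ l ∈ lengthBox N, (5 / 14 : ℚ) ^ tailLength l * 3 ^ (l.2.2.2.1 + l.2.2.2.2) ≤ 1 / 14 := by
  have hsplit : ∀ l : ℕ × ℕ × ℕ × ℕ × ℕ,
      (5 / 14 : ℚ) ^ tailLength l * 3 ^ (l.2.2.2.1 + l.2.2.2.2) =
        (5 / 14) ^ l.1 * ((5 / 14) ^ l.2.1 *
          ((5 / 14) ^ l.2.2.1 * ((75 / 196) ^ l.2.2.2.1 * (75 / 196) ^ l.2.2.2.2))) := by
    intro l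
    rw [show (75 / 196 : ℚ) = (5 / 14) ^ 2 * 3 by norm_num, mul_pow, mul_pow, ← pow_mul,
      ← pow_mul, tailLength]
    ring
  have hx := sum_Icc_pow_le (x := (5 / 14 : ℚ)) (by norm_num) (by norm_num) N
  have hy := sum_Icc_pow_le (x := (75 / 196 : ℚ)) (by norm_num) (by norm_num) N
  simp only [hsplit, lengthBox, sum_product, ← mul_sum, ← sum_mul]
  refine le_trans (b := (5 / 14 / (1 - 5 / 14)) * ((5 / 14 / (1 - 5 / 14)) *
    ((5 / 14 / (1 - 5 / 14)) * ((75 / 196 / (1 - 75 / 196)) * (75 / 196 / (1 - 75 / 196))))))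
    ?_ (by norm_num)
  gcongr

variable {a b c d e : V} {t : List V}

theorem length_flatMap_of_perm (ht : t.Perm [d, e, a, b, c, d, e]) (φ : V → List α) :
    (t.flatMap φ).length =
      tailLength ((φ a).length, (φ b).length, (φ c).length, (φ d).length, (φ e).length) := by
  rw [(ht.flatMap_right φ).length_eq]
  simp [tailLength]
  ring

variable [DecidableEq V]

def blockSubst (a b d e : V) (la lb : ℕ) (s ud ue : List α) : V → List α := fun v =>
  if v = d then ud else if v = e then ue else
    if v = a then s.take la else if v = b then (s.drop la).take lb else (s.drop la).drop lb

theorem blockSubst_eq_of_mem (hnd : [a, b, c, d, e].Nodup) (φ : V → List α)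
    {v : V} (hv : v ∈ [a, b, c, d, e]) :
    blockSubst a b d e (φ a).length (φ b).length (φ a ++ φ b ++ φ c) (φ d) (φ e) v = φ v := by
  simp only [List.nodup_cons, List.mem_cons, List.not_mem_nil, or_false] at hnd
  simp only [List.mem_cons, List.not_mem_nil, or_false] at hv
  rcases hv with rfl | rfl | rfl | rfl | rfl <;> simp_all [blockSubst, eq_comm]

/-- Recovers a bad extension `u h(a) h(b) h(c) h(t)` from its prefix `x.1 = u h(a) h(b) h(c)`,
the lengths `l` of `h(a)`, `h(b)`, `h(c)` and `x.2 = (h(d), h(e))`. -/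
def rebuild (a b d e : V) (t : List V) (l : ℕ × ℕ × ℕ × ℕ × ℕ)
    (x : List α × List α × List α) : List α :=
  x.1 ++ t.flatMap
    (blockSubst a b d e l.1 l.2.1 (x.1.drop (x.1.length - (l.1 + l.2.1 + l.2.2.1))) x.2.1 x.2.2)

variable [Fintype α] [DecidableEq α]

theorem mem_biUnion_of_mem_badExtensions (hnd : [a, b, c, d, e].Nodup)
    (ht : t.Perm [d, e, a, b, c, d, e]) {n : ℕ} {w : List α}
    (hw : w ∈ badExtensions (a :: b :: c :: t) n) :
    w ∈ {l ∈ lengthBox (n + 1) | tailLength l ≤ n + 1}.biUnion fun l =>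
      (avoiders (a :: b :: c :: t) (n + 1 - tailLength l) ×ˢ words α l.2.2.2.1 ×ˢ
        words α l.2.2.2.2).image (rebuild a b d e t l) := by
  classical
  obtain ⟨hw, hocc⟩ := mem_filter.mp hw
  obtain ⟨⟨w, x⟩, hwx, rfl⟩ := mem_image.mp hw
  dsimp only at hocc ⊢
  obtain ⟨hwlen, hwav⟩ : w.length = n ∧ ¬ Occurs _ w := mem_avoiders.mp (mem_product.mp hwx).1
  obtain ⟨φ, hφ, u, hu⟩ := exists_suffix_of_occurs_append_singleton hwav hocc
  have hpos : ∀ v, 1 ≤ (φ v).length := fun v => List.length_pos_iff.mpr (hφ v)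
  set l := ((φ a).length, (φ b).length, (φ c).length, (φ d).length, (φ e).length)
  set W := u ++ (φ a ++ φ b ++ φ c)
  have hWw : W ++ t.flatMap φ = w ++ [x] := by simp [W, ← hu]
  have hWlen : W.length + tailLength l = n + 1 := by
    rw [← length_flatMap_of_perm ht, ← List.length_append, hWw]; simp [hwlen]
  have htail : 1 ≤ tailLength l := by simp only [tailLength, l]; linarith [hpos a]
  have hWav : ¬ Occurs (a :: b :: c :: t) W := fun hW =>
    hwav (hW.mono (List.prefix_of_prefix_length_le ⟨_, hWw⟩ ⟨[x], rfl⟩ (by omega)).isInfix)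
  have hrebuild : rebuild a b d e t l (W, φ d, φ e) = w ++ [x] := by
    have hsuffix : W.drop (W.length - (l.1 + l.2.1 + l.2.2.1)) = φ a ++ φ b ++ φ c := by
      rw [show W.length - _ = u.length by simp [W, l]; omega]
      exact List.drop_left
    rw [← hWw, rebuild, hsuffix]
    congr 1
    refine List.flatMap_congr fun v hv => blockSubst_eq_of_mem hnd φ ?_
    have := ht.subset hv
    simp only [List.mem_cons, List.not_mem_nil, or_false] at this ⊢
    tauto
  refine mem_biUnion.mpr
    ⟨l, mem_filter.mpr ⟨?_, by omega⟩, mem_image.mpr ⟨(W, φ d, φ e), ?_, hrebuild⟩⟩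
  · simp only [lengthBox, mem_product, mem_Icc, tailLength, l] at htail hWlen ⊢
    refine ⟨⟨hpos a, ?_⟩, ⟨hpos b, ?_⟩, ⟨hpos c, ?_⟩, ⟨hpos d, ?_⟩, ⟨hpos e, ?_⟩⟩ <;> omega
  · simp only [mem_product, mem_avoiders, mem_words]
    exact ⟨⟨by omega, hWav⟩, rfl, rfl⟩

theorem card_badExtensions_le (hnd : [a, b, c, d, e].Nodup) (ht : t.Perm [d, e, a, b, c, d, e])
    (n : ℕ) :
    #(badExtensions (α := α) (a :: b :: c :: t) n) ≤
      ∑ l ∈ lengthBox (n + 1) with tailLength l ≤ n + 1,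
        #(avoiders (α := α) (a :: b :: c :: t) (n + 1 - tailLength l)) *
          Fintype.card α ^ (l.2.2.2.1 + l.2.2.2.2) := by
  refine (card_le_card fun w hw => mem_biUnion_of_mem_badExtensions hnd ht hw).trans
    (card_biUnion_le.trans (sum_le_sum fun l _ => card_image_le.trans ?_))
  simp [card_words, pow_add]

end FivePattern

/-- Of the `3 A n` one-letter extensions at most `A n / 5` are bad. -/
theorem card_avoiders_succ_ge [DecidableEq V] {a b c d e : V} {t : List V}
    (hnd : [a, b, c, d, e].Nodup) (ht : t.Perm [d, e, a, b, c, d, e]) (n : ℕ)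
    (ih : ∀ m < n, 14 / 5 * (#(avoiders (α := Fin 3) (a :: b :: c :: t) m) : ℚ) ≤
      #(avoiders (α := Fin 3) (a :: b :: c :: t) (m + 1))) :
    14 / 5 * (#(avoiders (α := Fin 3) (a :: b :: c :: t) n) : ℚ) ≤
      #(avoiders (α := Fin 3) (a :: b :: c :: t) (n + 1)) := by
  set A : ℕ → ℚ := fun m => #(avoiders (α := Fin 3) (a :: b :: c :: t) m)
  set T := {l ∈ lengthBox (n + 1) | tailLength l ≤ n + 1}
  have hext : 3 * A n ≤ A (n + 1) + #(badExtensions (α := Fin 3) (a :: b :: c :: t) n) := by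
    have := card_extensions_le (α := Fin 3) (a :: b :: c :: t) n
    rw [card_extensions, Fintype.card_fin, mul_comm] at this
    simp only [A]
    exact_mod_cast this
  have hbad : (#(badExtensions (α := Fin 3) (a :: b :: c :: t) n) : ℚ) ≤
      ∑ l ∈ T, A (n + 1 - tailLength l) * 3 ^ (l.2.2.2.1 + l.2.2.2.2) := by
    have := card_badExtensions_le (α := Fin 3) hnd ht n
    rw [Fintype.card_fin] at this
    simp only [A, T]
    exact_mod_cast this
  have hterm : ∀ l ∈ T, A (n + 1 - tailLength l) * 3 ^ (l.2.2.2.1 + l.2.2.2.2) ≤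
      14 / 5 * A n * ((5 / 14) ^ tailLength l * 3 ^ (l.2.2.2.1 + l.2.2.2.2)) := by
    intro l hl
    obtain ⟨hbox, hle⟩ := mem_filter.mp hl
    obtain ⟨k, hk⟩ : ∃ k, tailLength l = k + 1 := by
      refine Nat.exists_eq_add_one.mpr ?_
      simp only [lengthBox, mem_product, mem_Icc] at hbox
      simp only [tailLength]
      omega
    have hdecay :=
      pow_sub_mul_le_of_forall_mul_le (by norm_num) ih (m := n + 1 - tailLength l) (by omega)
    rw [show n - (n + 1 - tailLength l) = k by omega] at hdecay
    have hA : A (n + 1 - tailLength l) ≤ (5 / 14) ^ k * A n :=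
      calc A (n + 1 - tailLength l)
          = (5 / 14) ^ k * ((14 / 5) ^ k * A (n + 1 - tailLength l)) := by
            rw [← mul_assoc, ← mul_pow]; norm_num
        _ ≤ (5 / 14) ^ k * A n := by gcongr
    calc A (n + 1 - tailLength l) * 3 ^ (l.2.2.2.1 + l.2.2.2.2)
        ≤ (5 / 14) ^ k * A n * 3 ^ (l.2.2.2.1 + l.2.2.2.2) := by gcongr
      _ = _ := by rw [hk, pow_succ]; ring
  have hsum : ∑ l ∈ T, 14 / 5 * A n * ((5 / 14 : ℚ) ^ tailLength l * 3 ^ (l.2.2.2.1 + l.2.2.2.2))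
      ≤ 14 / 5 * A n * (1 / 14) := by
    rw [← mul_sum]
    gcongr
    exact (sum_le_sum_of_subset_of_nonneg (filter_subset _ _) fun _ _ _ => by positivity).trans
      (sum_lengthBox_le (n + 1))
  linarith [sum_le_sum hterm]

theorem isKAvoidable_three_of_perm [DecidableEq V] {a b c d e : V} {t : List V}
    (hnd : [a, b, c, d, e].Nodup) (ht : t.Perm [d, e, a, b, c, d, e]) :
    IsKAvoidable 3 (a :: b :: c :: t) := by
  set A : ℕ → ℚ := fun n => #(avoiders (α := Fin 3) (a :: b :: c :: t) n)
  have hgrowth : ∀ n, 14 / 5 * A n ≤ A (n + 1) := fun n =>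
    Nat.strong_induction_on n fun n ih => card_avoiders_succ_ge hnd ht n ih
  have hpos : ∀ n, 0 < A n := by
    intro n
    induction n with
    | zero =>
      have hnil : [] ∈ avoiders (α := Fin 3) (a :: b :: c :: t) 0 :=
        mem_avoiders.mpr ⟨rfl, not_occurs_nil (List.cons_ne_nil _ _)⟩
      simp only [A]
      exact_mod_cast card_pos.mpr ⟨[], hnil⟩
    | succ n ih => linarith [hgrowth n]
  refine isKAvoidable_of_forall_length fun n => ?_
  have hn := hpos n
  simp only [A, Nat.cast_pos] at hn
  obtain ⟨w, hw⟩ := card_pos.mp hn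
  exact ⟨w, mem_avoiders.mp hw⟩

theorem Doubled.count_eq_two [DecidableEq V] {p : List V} (hd : Doubled p)
    (hlen : p.length = 2 * #p.toFinset) {v : V} (hv : v ∈ p) : p.count v = 2 := by
  have hsum : ∑ u ∈ p.toFinset, 2 = ∑ u ∈ p.toFinset, p.count u := by
    rw [List.sum_toFinset_count_eq_length, sum_const, smul_eq_mul, hlen, mul_comm]
  exact ((sum_eq_sum_iff_of_le fun u hu => hd u (List.mem_toFinset.mp hu)).mp hsum v
    (List.mem_toFinset.mpr hv)).symm

theorem List.perm_append_self_of_count_eq_two [DecidableEq V] {p D : List V}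
    (hcount : ∀ v ∈ p, p.count v = 2) (hD : D.Nodup) (hmem : ∀ v, v ∈ p ↔ v ∈ D) :
    p.Perm (D ++ D) := by
  refine List.perm_iff_count.mpr fun v => ?_
  rw [List.count_append, hD.count]
  by_cases hv : v ∈ p
  · simp [hcount v hv, (hmem v).mp hv]
  · simp [List.count_eq_zero.mpr hv, (hmem v).not.mp hv]

theorem exists_perm_of_doubled [DecidableEq V] {p : List V} (hd : Doubled p)
    (hv : #p.toFinset = 5) (hlen : p.length = 10) (hpre : (p.take 3).Nodup) :
    ∃ a b c d e t, p = a :: b :: c :: t ∧ [a, b, c, d, e].Nodup ∧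
      t.Perm [d, e, a, b, c, d, e] := by
  obtain ⟨a, b, c, t, rfl⟩ : ∃ a b c t, p = a :: b :: c :: t := by
    rcases p with _ | ⟨a, _ | ⟨b, _ | ⟨c, t⟩⟩⟩
    all_goals first | exact ⟨a, b, c, t, rfl⟩ | simp at hlen
  change [a, b, c].Nodup at hpre
  have habc : [a, b, c].toFinset ⊆ (a :: b :: c :: t).toFinset := by
    intro v
    simp only [List.mem_toFinset]
    exact fun hv => List.subset_append_left [a, b, c] t hv
  have hrest : #((a :: b :: c :: t).toFinset \ [a, b, c].toFinset) = 2 := by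
    rw [card_sdiff_of_subset habc, hv, List.toFinset_card_of_nodup hpre]; rfl
  obtain ⟨d, e, hde, hDE⟩ := card_eq_two.mp hrest
  have hnot : ∀ v ∈ [d, e], v ∉ [a, b, c] := fun v hv => by
    have : v ∈ (a :: b :: c :: t).toFinset \ [a, b, c].toFinset := by rw [hDE]; simpa using hv
    simpa using (mem_sdiff.mp this).2
  have hnd : [a, b, c, d, e].Nodup :=
    List.nodup_append.mpr ⟨hpre, by simpa using hde, fun u hu v hv huv => hnot v hv (huv ▸ hu)⟩
  have hmem : ∀ v, v ∈ a :: b :: c :: t ↔ v ∈ [a, b, c, d, e] := fun v => by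
    rw [← List.mem_toFinset, ← union_sdiff_of_subset habc, hDE]
    simp only [mem_union, List.mem_toFinset, mem_insert, mem_singleton, List.mem_cons,
      List.not_mem_nil, or_false]
    tauto
  exact ⟨a, b, c, d, e, t, rfl, hnd, (List.perm_append_left_iff [a, b, c]).mp <|
    List.perm_append_self_of_count_eq_two (fun v => hd.count_eq_two (by rw [hlen, hv])) hnd hmem⟩

end

/-- Every doubled pattern with exactly 5 distinct variables and length exactly 10
whose first three letters are pairwise distinct variables (prefix `ABC` up to
renaming) is 3-avoidable. -/
theorem doubled_five_vars_length_ten_prefix_abc {V : Type*} [DecidableEq V]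
    (p : List V) (hd : Doubled p) (hv : p.toFinset.card = 5) (hlen : p.length = 10)
    (hpre : (p.take 3).Nodup) :
    IsKAvoidable 3 p := by
  obtain ⟨a, b, c, d, e, t, rfl, hnd, ht⟩ := exists_perm_of_doubled hd hv hlen hpre
  exact isKAvoidable_three_of_perm hnd ht
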